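/- Let k ≥ 1, let G be a k-edge-connected finite simple graph on V, and fix a root r ∈ V. If u and v are snug vertices with snug shores (S₁ᵘ, S₂ᵘ) and (S₁ᵛ, S₂ᵛ) respectively, and S₂ᵘ = S₁ᵛ, then u and v are adjacent in G. (In particular, the underlying undirected graph of the chain graph is a subgraph of G.) -/

import Mathlib

/-!
Let `(A, A ∪ {u})` be snug shores for `u`. Moving `u` into `A` removes the cut edges from `u`
into `A` and adds those from `u` out of `A`; since both cuts have `k` edges, `u` has as many
neighbours inside `A` as outside, hence at least `(k + 1) / 2` of each. Now let `B` be the second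
shore of `u` and the first shore of `v`: the `k`-cut `δ(B)` contains at least `(k + 1) / 2` edges
at `u` (leaving `B`) and at least `(k + 1) / 2` edges at `v` (entering `B`). These sets can only
share the edge `uv`, so without it `δ(B)` would have more than `k` edges.
-/

open Finset

variable {V : Type*} [Fintype V] [DecidableEq V]

/-- `Crosses S e`: exactly one endpoint of the edge/link `e` lies in `S`. -/
def Crosses (S : Finset V) (e : Sym2 V) : Prop :=
  ∃ x y : V, e = s(x, y) ∧ x ∈ S ∧ y ∉ S

instance (S : Finset V) : DecidablePred (Crosses S) := fun e =>
  decidable_of_iff (∃ x y : V, e = s(x, y) ∧ x ∈ S ∧ y ∉ S) Iff.rfl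

/-- The cut `δ(S)`: edges of `G` with exactly one endpoint in `S`. -/
def cutEdges (G : SimpleGraph V) [DecidableRel G.Adj] (S : Finset V) :
    Finset (Sym2 V) :=
  G.edgeFinset.filter fun e => Crosses S e

/-- `G` is `k`-edge-connected: every nonempty proper cut has at least `k` crossing edges. -/
def EdgeConnected (G : SimpleGraph V) [DecidableRel G.Adj] (k : ℕ) : Prop :=
  ∀ S : Finset V, S.Nonempty → S ≠ Finset.univ → k ≤ (cutEdges G S).card

/-- `S` is a `k`-cut: a nonempty proper vertex set with exactly `k` crossing edges. -/
def IsCut (G : SimpleGraph V) [DecidableRel G.Adj] (k : ℕ) (S : Finset V) : Prop :=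
  S.Nonempty ∧ S ≠ Finset.univ ∧ (cutEdges G S).card = k

/-- `(S₁, S₂)` are snug shores for `v` (with respect to the root `r`):
two `k`-cuts avoiding `r` with `v ∉ S₁` and `S₂ = S₁ ∪ {v}`. -/
def SnugShores (G : SimpleGraph V) [DecidableRel G.Adj] (k : ℕ) (r v : V)
    (S₁ S₂ : Finset V) : Prop :=
  IsCut G k S₁ ∧ IsCut G k S₂ ∧ r ∉ S₁ ∧ r ∉ S₂ ∧ v ∉ S₁ ∧ S₂ = insert v S₁

/-- `v` is a snug vertex (with respect to the root `r`). -/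
def Snug (G : SimpleGraph V) [DecidableRel G.Adj] (k : ℕ) (r v : V) : Prop :=
  v ≠ r ∧ k + 1 ≤ G.degree v ∧ ∃ S₁ S₂ : Finset V, SnugShores G k r v S₁ S₂

/-- A snug chain: snug vertices `u 0, …, u t` together with `k`-cuts
`S 0, …, S (t+1)` such that `(S i, S (i+1))` are snug shores for `u i`. -/
def IsSnugChain (G : SimpleGraph V) [DecidableRel G.Adj] (k : ℕ) (r : V)
    (t : ℕ) (u : ℕ → V) (S : ℕ → Finset V) : Prop :=
  ∀ i ≤ t, Snug G k r (u i) ∧ SnugShores G k r (u i) (S i) (S (i + 1))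


section

variable (G : SimpleGraph V) [DecidableRel G.Adj] {u v : V} {S : Finset V}

omit [Fintype V] [DecidableEq V] in
lemma crosses_mk_iff {x y : V} : Crosses S s(x, y) ↔ x ∈ S ∧ y ∉ S ∨ y ∈ S ∧ x ∉ S := by
  simp only [Crosses, Sym2.eq_iff]
  grind

lemma cutEdges_filter_mem_of_mem (hu : u ∈ S) :
    (cutEdges G S).filter (u ∈ ·) = (G.neighborFinset u \ S).map (Sym2.mkEmbedding u) := by
  ext e
  induction e using Sym2.ind with
  | _ x y =>
    simp only [cutEdges, mem_filter, SimpleGraph.mem_edgeFinset, SimpleGraph.mem_edgeSet,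
      crosses_mk_iff, Sym2.mem_iff, mem_map, Sym2.mkEmbedding_apply, Sym2.eq_iff,
      SimpleGraph.mem_neighborFinset, mem_sdiff]
    grind [SimpleGraph.Adj.symm]

lemma cutEdges_filter_mem_of_notMem (hu : u ∉ S) :
    (cutEdges G S).filter (u ∈ ·) = (G.neighborFinset u ∩ S).map (Sym2.mkEmbedding u) := by
  ext e
  induction e using Sym2.ind with
  | _ x y =>
    simp only [cutEdges, mem_filter, SimpleGraph.mem_edgeFinset, SimpleGraph.mem_edgeSet,
      crosses_mk_iff, Sym2.mem_iff, mem_map, Sym2.mkEmbedding_apply, Sym2.eq_iff,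
      SimpleGraph.mem_neighborFinset, mem_inter]
    grind [SimpleGraph.Adj.symm]

lemma cutEdges_insert_filter_notMem :
    (cutEdges G (insert u S)).filter (u ∉ ·) = (cutEdges G S).filter (u ∉ ·) := by
  ext e
  induction e using Sym2.ind with
  | _ x y =>
    simp only [cutEdges, mem_filter, SimpleGraph.mem_edgeFinset, crosses_mk_iff, mem_insert,
      Sym2.mem_iff]
    grind

lemma card_cutEdges_insert_add (hu : u ∉ S) :
    #(cutEdges G (insert u S)) + #(G.neighborFinset u ∩ S) =
      #(cutEdges G S) + #(G.neighborFinset u \ S) := by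
  have hS := card_filter_add_card_filter_not (s := cutEdges G S) (u ∈ ·)
  have hIS := card_filter_add_card_filter_not (s := cutEdges G (insert u S)) (u ∈ ·)
  rw [cutEdges_filter_mem_of_notMem G hu, card_map] at hS
  rw [cutEdges_filter_mem_of_mem G (mem_insert_self u S), card_map,
    sdiff_insert_of_notMem (G.notMem_neighborFinset_self u), cutEdges_insert_filter_notMem] at hIS
  omega

lemma card_sdiff_add_card_inter_le_card_cutEdges (huv : ¬G.Adj u v) (hu : u ∈ S) (hv : v ∉ S) :
    #(G.neighborFinset u \ S) + #(G.neighborFinset v ∩ S) ≤ #(cutEdges G S) := by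
  rw [← card_map (Sym2.mkEmbedding u), ← card_map (Sym2.mkEmbedding v),
    ← cutEdges_filter_mem_of_mem G hu, ← cutEdges_filter_mem_of_notMem G hv,
    ← card_union_of_disjoint]
  · exact card_le_card (union_subset (filter_subset _ _) (filter_subset _ _))
  · refine disjoint_filter.2 fun e he heu hev => huv ?_
    have huv' : u ≠ v := ne_of_mem_of_not_mem hu hv
    rw [(Sym2.mem_and_mem_iff huv').1 ⟨heu, hev⟩] at he
    exact G.mem_edgeFinset.1 (mem_filter.1 he).1

end

lemma SnugShores.succ_le_two_mul_card {G : SimpleGraph V} [DecidableRel G.Adj] {k : ℕ} {r u : V}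
    {S₁ S₂ : Finset V} (h : SnugShores G k r u S₁ S₂) (hdeg : k + 1 ≤ G.degree u) :
    k + 1 ≤ 2 * #(G.neighborFinset u ∩ S₁) ∧ k + 1 ≤ 2 * #(G.neighborFinset u \ S₂) := by
  obtain ⟨⟨-, -, h₁⟩, ⟨-, -, h₂⟩, -, -, hu, rfl⟩ := h
  have hbal := card_cutEdges_insert_add G hu
  have hdeg' := card_inter_add_card_sdiff (G.neighborFinset u) S₁
  rw [sdiff_insert_of_notMem (G.notMem_neighborFinset_self u)]
  rw [← G.card_neighborFinset_eq_degree] at hdeg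
  omega

theorem chain_arc_adjacent_general
    (k : ℕ) (G : SimpleGraph V) [DecidableRel G.Adj]
    (r u v : V)
    (hu : Snug G k r u) (hv : Snug G k r v)
    (S₁u S₂u S₁v S₂v : Finset V)
    (hsu : SnugShores G k r u S₁u S₂u) (hsv : SnugShores G k r v S₁v S₂v)
    (heq : S₂u = S₁v) :
    G.Adj u v := by
  subst heq
  have hu_out := (hsu.succ_le_two_mul_card hu.2.1).2
  have hv_in := (hsv.succ_le_two_mul_card hv.2.1).1
  obtain ⟨-, -, -, -, -, rfl⟩ := hsu
  obtain ⟨⟨-, -, hcard⟩, -, -, -, hvB, -⟩ := hsv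
  by_contra huv
  have hcut := card_sdiff_add_card_inter_le_card_cutEdges G huv (mem_insert_self u S₁u) hvB
  omega

/-- If the second snug shore of `u` equals the first snug shore of `v`, then
`u` and `v` are adjacent in `G` (the chain graph is a subgraph of `G`). -/
theorem chain_arc_adjacent
    (k : ℕ) (hk : 1 ≤ k) (G : SimpleGraph V) [DecidableRel G.Adj]
    (hG : EdgeConnected G k) (r u v : V)
    (hu : Snug G k r u) (hv : Snug G k r v)
    (S₁u S₂u S₁v S₂v : Finset V)
    (hsu : SnugShores G k r u S₁u S₂u) (hsv : SnugShores G k r v S₁v S₂v)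
    (heq : S₂u = S₁v) :
    G.Adj u v :=
  chain_arc_adjacent_general k G r u v hu hv S₁u S₂u S₁v S₂v hsu hsv heq
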